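/- arXiv:2101.06207 — 2 statements merged into one kernel-verified Lean document; each statement's English description precedes it below -/
import Mathlib

section
/- Let $L(t) := \exp\left(\frac{\ln t}{\ln \ln t}\right)$ for $t > e$, and let $m(t) := \int_{t_0}^t \frac{K L(s)}{s}\,ds$ for a constant $K>0$ and fixed $t_0 > e$. Then for every $\alpha > 0$, $\lim_{t\to\infty} \frac{m(t/(\ln t)^{\alpha})}{m(t)} = e^{-\alpha}$. -/
/-!
Write `Φ z = exp (z / log z) * log z` (`expDivLogMulLog`). The derivative of `K Φ (log t)` is
`K L(t)/t · (1 + o(1))`, and since `Φ (log t) → ∞`, comparing antiderivatives (a form of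
L'Hôpital's rule) gives `m(t) ~ K Φ(log t)`. With `z = log t` the rescaling `t ↦ t / (log t)^α`
becomes `z ↦ w = z - α log z`, and `Φ w / Φ z = exp (w / log w - z / log z) · log w / log z`.
Here `log w / log z → 1`, and with `y = z / log z` the exponent equals
`-α log z / log w - y log (1 - α / y) / log w`, which tends to `-α` because
`y log (1 - α / y) → -α`.
-/

open Real Filter Asymptotics Set Topology

theorem Asymptotics.IsLittleO.of_hasDerivAt {E : Type*} [NormedAddCommGroup E] [NormedSpace ℝ E]
    {F f : ℝ → E} {G g : ℝ → ℝ}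
    (hF : ∀ᶠ x in atTop, HasDerivAt F (f x) x) (hG : ∀ᶠ x in atTop, HasDerivAt G (g x) x)
    (hg : ∀ᶠ x in atTop, 0 ≤ g x) (hGtop : Tendsto G atTop atTop) (hfg : f =o[atTop] g) :
    F =o[atTop] G := by
  refine isLittleO_iff.2 fun c hc => ?_
  obtain ⟨ε, hε, rfl⟩ : ∃ ε, 0 < ε ∧ c = ε + ε := ⟨c / 2, half_pos hc, (add_halves c).symm⟩
  obtain ⟨a, ha⟩ := eventually_atTop.1 (hF.and (hG.and (hg.and (hfg.bound hε))))
  have fence : ∀ x ≥ a, ‖F x - F a‖ ≤ ε * (G x - G a) := by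
    intro x hx
    refine image_norm_le_of_norm_deriv_right_le_deriv_boundary' (a := a) (b := x)
      (f := fun x => F x - F a) (B := fun x => ε * (G x - G a)) ?_
      (fun y hy => ((ha y hy.1).1.sub_const (F a)).hasDerivWithinAt) (by simp) ?_
      (fun y hy => (((ha y hy.1).2.1.sub_const (G a)).const_mul ε).hasDerivWithinAt) ?_
      ⟨hx, le_rfl⟩
    · exact fun y hy => ((ha y hy.1).1.continuousAt.sub continuousAt_const).continuousWithinAt
    · exact fun y hy =>
        (((ha y hy.1).2.1.continuousAt.sub continuousAt_const).const_mul ε).continuousWithinAt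
    · intro y hy
      obtain ⟨-, -, hgy, hfy⟩ := ha y hy.1
      simpa [Real.norm_of_nonneg hgy] using hfy
  filter_upwards [hGtop.eventually_ge_atTop ((‖F a‖ + ε * |G a|) / ε), eventually_ge_atTop a]
    with x hGx hx
  rw [div_le_iff₀ hε] at hGx
  calc ‖F x‖ ≤ ‖F a‖ + ‖F x - F a‖ := norm_le_norm_add_norm_sub' _ _
    _ ≤ ‖F a‖ + ε * |G a| + ε * G x := by
        nlinarith [fence x hx, mul_le_mul_of_nonneg_left (neg_le_abs (G a)) hε.le]
    _ ≤ (ε + ε) * G x := by linarith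
    _ ≤ (ε + ε) * ‖G x‖ := by gcongr; exact Real.le_norm_self _

theorem Asymptotics.IsEquivalent.of_hasDerivAt {F f G g : ℝ → ℝ}
    (hF : ∀ᶠ x in atTop, HasDerivAt F (f x) x) (hG : ∀ᶠ x in atTop, HasDerivAt G (g x) x)
    (hg : ∀ᶠ x in atTop, 0 ≤ g x) (hGtop : Tendsto G atTop atTop) (hfg : f ~[atTop] g) :
    F ~[atTop] G :=
  IsLittleO.of_hasDerivAt ((hF.and hG).mono fun _ h => h.1.sub h.2) hG hg hGtop hfg

theorem hasDerivAt_integral_of_continuousOn_Ioi {E : Type*} [NormedAddCommGroup E]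
    [NormedSpace ℝ E] [CompleteSpace E] {f : ℝ → E} {a b t : ℝ}
    (hf : ContinuousOn f (Ioi a)) (hb : a < b) (ht : a < t) :
    HasDerivAt (fun u => ∫ x in b..u, f x) (f t) t :=
  intervalIntegral.integral_hasDerivAt_right
    ((hf.mono (ordConnected_Ioi.uIcc_subset hb ht)).intervalIntegrable)
    (hf.stronglyMeasurableAtFilter isOpen_Ioi t ht) (hf.continuousAt (Ioi_mem_nhds ht))

lemma tendsto_div_log_atTop : Tendsto (fun z : ℝ => z / log z) atTop atTop := by
  have h := isLittleO_log_id_atTop.tendsto_div_nhds_zero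
  have hpos : ∀ᶠ z : ℝ in atTop, 0 < log z / id z := by
    filter_upwards [eventually_gt_atTop 1] with z hz
    exact div_pos (log_pos hz) (zero_lt_one.trans hz)
  simpa [Pi.inv_def] using (tendsto_nhdsWithin_iff.2 ⟨h, hpos⟩).inv_tendsto_nhdsGT_zero

lemma tendsto_sub_mul_log_atTop (α : ℝ) : Tendsto (fun z : ℝ => z - α * log z) atTop atTop :=
  ((IsEquivalent.refl (u := id)).sub_isLittleO
    (isLittleO_log_id_atTop.const_mul_left α)).symm.tendsto_atTop tendsto_id

lemma tendsto_one_add_div_div_log (c : ℝ) :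
    Tendsto (fun z : ℝ => 1 + c / (z / log z)) atTop (𝓝 1) := by
  simpa using ((tendsto_const_nhds (x := c)).div_atTop tendsto_div_log_atTop).const_add 1

lemma eventually_log_sub_mul_log_eq (α : ℝ) : ∀ᶠ z : ℝ in atTop,
    log (z - α * log z) = log z + log (1 + -α / (z / log z)) := by
  filter_upwards [eventually_gt_atTop 1,
    (tendsto_one_add_div_div_log (-α)).eventually_const_lt one_pos] with z hz hpos
  have hlog : log z ≠ 0 := (log_pos hz).ne'
  rw [← log_mul (by positivity) hpos.ne']
  congr 1
  field_simp
  ring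

lemma tendsto_log_sub_mul_log_div_log (α : ℝ) :
    Tendsto (fun z : ℝ => log (z - α * log z) / log z) atTop (𝓝 1) := by
  have hcorr : Tendsto (fun z : ℝ => log (1 + -α / (z / log z))) atTop (𝓝 0) := by
    simpa [Function.comp_def] using
      (continuousAt_log one_ne_zero).tendsto.comp (tendsto_one_add_div_div_log (-α))
  have h := (hcorr.div_atTop tendsto_log_atTop).const_add (1 : ℝ)
  rw [add_zero] at h
  refine h.congr' ?_
  filter_upwards [eventually_log_sub_mul_log_eq α, eventually_gt_atTop 1] with z heq hz
  have hlog : log z ≠ 0 := (log_pos hz).ne'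
  rw [heq]
  field_simp

lemma tendsto_sub_div_log_sub_div_log (α : ℝ) :
    Tendsto (fun z : ℝ => (z - α * log z) / log (z - α * log z) - z / log z) atTop
      (𝓝 (-α)) := by
  have hlog_atTop : Tendsto (fun z => log (z - α * log z)) atTop atTop :=
    tendsto_log_atTop.comp (tendsto_sub_mul_log_atTop α)
  have hratio := (tendsto_log_sub_mul_log_div_log α).inv₀ one_ne_zero
  have hmul := (tendsto_mul_log_one_add_div_atTop (-α)).comp tendsto_div_log_atTop
  have h := (hratio.const_mul (-α)).sub (hmul.div_atTop hlog_atTop)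
  rw [inv_one, mul_one, sub_zero] at h
  refine h.congr' ?_
  filter_upwards [eventually_log_sub_mul_log_eq α, eventually_gt_atTop 1,
    hlog_atTop.eventually_gt_atTop 0] with z heq hz hw
  have hlog : log z ≠ 0 := (log_pos hz).ne'
  have hcorr : log (1 + -α / (z / log z)) = log (z - α * log z) - log z := by linarith
  simp only [Function.comp_apply, hcorr]
  field_simp
  ring

noncomputable def expDivLogMulLog (z : ℝ) : ℝ := exp (z / log z) * log z

lemma hasDerivAt_expDivLogMulLog {z : ℝ} (hz : 1 < z) :
    HasDerivAt expDivLogMulLog (exp (z / log z) * (1 - (log z)⁻¹ + z⁻¹)) z := by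
  have hz0 : z ≠ 0 := by positivity
  have hlog : log z ≠ 0 := (log_pos hz).ne'
  have hlog' := hasDerivAt_log hz0
  refine (((hasDerivAt_id' z).div hlog' hlog).exp.mul hlog').congr_deriv ?_
  simp only [Pi.div_apply]
  field_simp

lemma tendsto_expDivLogMulLog_atTop : Tendsto expDivLogMulLog atTop atTop := by
  refine tendsto_atTop_mono' _ ?_ tendsto_log_atTop
  filter_upwards [eventually_gt_atTop 1] with z hz
  have hlog := log_pos hz
  exact le_mul_of_one_le_left hlog.le (one_le_exp (by positivity))

lemma tendsto_expDivLogMulLog_sub_mul_log_div (α : ℝ) :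
    Tendsto (fun z => expDivLogMulLog (z - α * log z) / expDivLogMulLog z) atTop
      (𝓝 (exp (-α))) := by
  have h := ((continuous_exp.tendsto _).comp (tendsto_sub_div_log_sub_div_log α)).mul
    (tendsto_log_sub_mul_log_div_log α)
  rw [mul_one] at h
  refine h.congr' ?_
  filter_upwards [eventually_gt_atTop 1] with z hz
  have hlog : log z ≠ 0 := (log_pos hz).ne'
  simp only [Function.comp_apply, expDivLogMulLog, exp_sub]
  field_simp

lemma continuousOn_exp_log_div_log_log_div (K : ℝ) :
    ContinuousOn (fun s => K * exp (log s / log (log s)) / s) (Ioi (exp 1)) := by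
  intro s hs
  have hs0 : s ≠ 0 := ((exp_pos 1).trans hs).ne'
  have hlog : 1 < log s := by rwa [lt_log_iff_exp_lt ((exp_pos 1).trans hs)]
  have hloglog : log (log s) ≠ 0 := (log_pos hlog).ne'
  refine ContinuousAt.continuousWithinAt ?_
  have hcl := continuousAt_log hs0
  exact (continuousAt_const.mul (((hcl.div ((continuousAt_log (by linarith)).comp hcl)
    hloglog)).rexp)).div continuousAt_id hs0

lemma isEquivalent_integral_exp_log_div_log_log {K t₀ : ℝ} (hK : 0 < K) (ht₀ : exp 1 < t₀) :
    (fun t => ∫ s in t₀..t, K * exp (log s / log (log s)) / s) ~[atTop]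
      fun t => K * expDivLogMulLog (log t) := by
  have hloglog := tendsto_log_atTop.comp tendsto_log_atTop
  have hcorr : Tendsto (fun t => 1 - (log (log t))⁻¹ + (log t)⁻¹) atTop (𝓝 1) := by
    simpa using (hloglog.inv_tendsto_atTop.const_sub 1).add tendsto_log_atTop.inv_tendsto_atTop
  refine IsEquivalent.of_hasDerivAt (f := fun t => K * exp (log t / log (log t)) / t)
    (g := fun t => K * (exp (log t / log (log t)) * (1 - (log (log t))⁻¹ + (log t)⁻¹) * t⁻¹))
    ?_ ?_ ?_ ((tendsto_expDivLogMulLog_atTop.comp tendsto_log_atTop).const_mul_atTop hK) ?_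
  · filter_upwards [eventually_gt_atTop t₀] with t ht
    exact hasDerivAt_integral_of_continuousOn_Ioi (continuousOn_exp_log_div_log_log_div K)
      ht₀ (ht₀.trans ht)
  · filter_upwards [eventually_gt_atTop (exp 1)] with t ht
    have ht0 : 0 < t := (exp_pos 1).trans ht
    have hlog : 1 < log t := by rwa [lt_log_iff_exp_lt ht0]
    exact ((hasDerivAt_expDivLogMulLog hlog).comp t (hasDerivAt_log ht0.ne')).const_mul K
  · filter_upwards [eventually_gt_atTop 0, tendsto_log_atTop.eventually_ge_atTop 0,
      hloglog.eventually_ge_atTop 1] with t ht hlog hloglog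
    have : (log (log t))⁻¹ ≤ 1 := inv_le_one_of_one_le₀ hloglog
    have : 0 ≤ (log t)⁻¹ := inv_nonneg.2 hlog
    have : 0 ≤ 1 - (log (log t))⁻¹ + (log t)⁻¹ := by linarith
    positivity
  · have h := (IsEquivalent.refl (u := fun t => K * exp (log t / log (log t)) / t)).mul
      ((isEquivalent_const_iff_tendsto one_ne_zero).2 hcorr).symm
    convert h using 1 <;> ext t <;> simp only [Pi.mul_apply, Function.const_apply] <;> ring

lemma log_div_log_rpow {t : ℝ} (ht : 1 < t) (α : ℝ) :
    log (t / log t ^ α) = log t - α * log (log t) := by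
  rw [log_div (by positivity) (rpow_pos_of_pos (log_pos ht) α).ne', log_rpow (log_pos ht)]

lemma tendsto_div_log_rpow_atTop (α : ℝ) : Tendsto (fun t => t / log t ^ α) atTop atTop := by
  refine (tendsto_exp_atTop.comp ((tendsto_sub_mul_log_atTop α).comp tendsto_log_atTop)).congr' ?_
  filter_upwards [eventually_gt_atTop 1] with t ht
  rw [Function.comp_apply, Function.comp_apply, ← log_div_log_rpow ht,
    exp_log (div_pos (by linarith) (rpow_pos_of_pos (log_pos ht) α))]

theorem stmt_12 (K t₀ : ℝ) (hK : 0 < K) (ht₀ : Real.exp 1 < t₀)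
    (L m : ℝ → ℝ)
    (hL : ∀ t, Real.exp 1 < t → L t = Real.exp (Real.log t / Real.log (Real.log t)))
    (hm : ∀ t, m t = ∫ s in t₀..t, K * L s / s) :
    ∀ α : ℝ, 0 < α →
      Filter.Tendsto (fun t => m (t / (Real.log t) ^ α) / m t)
        Filter.atTop (nhds (Real.exp (-α))) := by
  intro α _
  have hm_eq : (fun t => ∫ s in t₀..t, K * exp (log s / log (log s)) / s) =ᶠ[atTop] m := by
    filter_upwards [eventually_ge_atTop t₀] with t ht
    rw [hm]
    refine intervalIntegral.integral_congr fun s hs => ?_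
    rw [uIcc_of_le ht] at hs
    rw [hL s (ht₀.trans_le hs.1)]
  have hequiv := (isEquivalent_integral_exp_log_div_log_log hK ht₀).congr_left hm_eq
  refine (((hequiv.comp_tendsto (tendsto_div_log_rpow_atTop α)).div hequiv).tendsto_nhds_iff).2 ?_
  refine ((tendsto_expDivLogMulLog_sub_mul_log_div α).comp tendsto_log_atTop).congr' ?_
  filter_upwards [eventually_gt_atTop 1] with t ht
  simp only [Function.comp_apply, Pi.div_apply, log_div_log_rpow ht]
  rw [mul_div_mul_left _ _ hK.ne']
end

section
/- Let $\alpha \in (0,1)$, $\beta \in (0, (1+\alpha)^{-1})$, and define a sequence $(\ell_k)_{k\ge0}$ by $\ell_{k+1} = \ell_k + \ln(1 + \ell_k^{-\alpha})$. Then there exists $\ell_0^* = \ell_0^*(\alpha,\beta)$ such that if $\ell_0 \ge \ell_0^*$ then $\ell_k \ge (\ell_0 + k)^{\beta}$ for all $k \ge 0$. -/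
/-!
Write `γ = αβ` and `δ = 1 - β - γ`, which is positive because `β(1 + α) < 1`. Inductively
`ℓ_k ≥ n^β` with `n = ℓ_0 + k`. If already `ℓ_k ≥ (n + 1)^β` there is nothing to do. Otherwise
`ℓ_k^{-α} ≥ (n + 1)^{-γ} ≥ n^{-γ}/2`, so the increment `log (1 + ℓ_k^{-α}) ≥ ℓ_k^{-α}/2` is at
least `n^{-γ}/4`, whereas by concavity `(n + 1)^β - n^β ≤ β n^{β-1} = β n^{-δ} n^{-γ}`, which is
at most `n^{-γ}/4` as soon as `n^δ ≥ 4β`.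
-/

open Filter

namespace Real

theorem half_le_log_one_add {x : ℝ} (hx0 : 0 ≤ x) (hx1 : x ≤ 1) : x / 2 ≤ log (1 + x) :=
  calc x / 2 ≤ x / (1 + x) := by gcongr; linarith
    _ = 1 - (1 + x)⁻¹ := by field_simp; ring
    _ ≤ log (1 + x) := one_sub_inv_le_log_of_pos (by linarith)

theorem rpow_add_le_rpow_add_mul {x h p : ℝ} (hx : 0 < x) (hxh : 0 ≤ x + h) (hp0 : 0 ≤ p)
    (hp1 : p ≤ 1) : (x + h) ^ p ≤ x ^ p + p * x ^ (p - 1) * h := by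
  have hs : -1 ≤ h / x := by rw [le_div_iff₀ hx]; linarith
  calc (x + h) ^ p = x ^ p * (1 + h / x) ^ p := by
        rw [← mul_rpow hx.le (by linarith), mul_add, mul_one, mul_div_cancel₀ _ hx.ne']
    _ ≤ x ^ p * (1 + p * (h / x)) := by
        gcongr; exact rpow_one_add_le_one_add_mul_self hs hp0 hp1
    _ = x ^ p + p * x ^ (p - 1) * h := by rw [rpow_sub_one hx.ne']; field_simp

theorem half_rpow_neg_le_rpow_neg_add_one {n γ : ℝ} (hn : 1 ≤ n) (hγ0 : 0 ≤ γ) (hγ1 : γ ≤ 1) :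
    n ^ (-γ) / 2 ≤ (n + 1) ^ (-γ) :=
  calc n ^ (-γ) / 2 = 2 ^ (-1 : ℝ) * n ^ (-γ) := by rw [rpow_neg_one]; ring
    _ ≤ 2 ^ (-γ) * n ^ (-γ) := by gcongr; linarith
    _ = (2 * n) ^ (-γ) := (mul_rpow zero_le_two (by linarith)).symm
    _ ≤ (n + 1) ^ (-γ) := rpow_le_rpow_of_nonpos (by linarith) (by linarith) (by linarith)

theorem rpow_add_one_le_add_quarter_rpow_neg {n β γ : ℝ} (hn : 0 < n) (hβ0 : 0 ≤ β)
    (hβ1 : β ≤ 1) (hn_large : 4 * β ≤ n ^ (1 - β - γ)) :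
    (n + 1) ^ β ≤ n ^ β + n ^ (-γ) / 4 := by
  have hsplit : n ^ (1 - β - γ) * n ^ (β - 1) = n ^ (-γ) := by rw [← rpow_add hn]; ring_nf
  have hscaled : 4 * β * n ^ (β - 1) ≤ n ^ (1 - β - γ) * n ^ (β - 1) :=
    mul_le_mul_of_nonneg_right hn_large (rpow_nonneg hn.le _)
  have hconcave := rpow_add_le_rpow_add_mul hn (by linarith : 0 ≤ n + 1) hβ0 hβ1
  linarith

theorem rpow_add_one_le_add_log_one_add_rpow_neg {α β n y : ℝ} (hα : 0 ≤ α) (hβ0 : 0 ≤ β)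
    (hβ1 : β ≤ 1) (hαβ : α * β ≤ 1) (hn : 1 ≤ n) (hn_large : 4 * β ≤ n ^ (1 - β - α * β))
    (hy : n ^ β ≤ y) : (n + 1) ^ β ≤ y + log (1 + y ^ (-α)) := by
  have hy1 : 1 ≤ y := (one_le_rpow hn hβ0).trans hy
  have hx0 : 0 ≤ y ^ (-α) := rpow_nonneg (by linarith) _
  rcases le_or_gt ((n + 1) ^ β) y with hle | hlt
  · have := log_nonneg (show 1 ≤ 1 + y ^ (-α) by linarith)
    linarith
  · have hdecay : (n + 1) ^ (-(α * β)) ≤ y ^ (-α) := by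
      rw [show -(α * β) = β * -α by ring, rpow_mul (by linarith)]
      exact rpow_le_rpow_of_nonpos (by linarith) hlt.le (by linarith)
    have hhalf := half_rpow_neg_le_rpow_neg_add_one hn (mul_nonneg hα hβ0) hαβ
    have hlog := half_le_log_one_add hx0 (rpow_le_one_of_one_le_of_nonpos hy1 (by linarith))
    have hinc := rpow_add_one_le_add_quarter_rpow_neg (by linarith) hβ0 hβ1 hn_large
    linarith

theorem eventually_rpow_add_one_le_add_log_one_add_rpow_neg {α β : ℝ} (hα : 0 ≤ α)
    (hβ0 : 0 ≤ β) (hβα : β * (1 + α) < 1) :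
    ∀ᶠ n : ℝ in atTop, 1 ≤ n ∧ ∀ y, n ^ β ≤ y → (n + 1) ^ β ≤ y + log (1 + y ^ (-α)) := by
  have hαβ : 0 ≤ α * β := mul_nonneg hα hβ0
  have hδ : 0 < 1 - β - α * β := by linarith
  filter_upwards [eventually_ge_atTop 1, (tendsto_rpow_atTop hδ).eventually_ge_atTop (4 * β)]
    with n hn hn_large
  exact ⟨hn, fun y hy => rpow_add_one_le_add_log_one_add_rpow_neg hα hβ0 (by linarith)
    (by linarith) hn hn_large hy⟩

end Real

theorem stmt_14 (α β : ℝ) (hα : α ∈ Set.Ioo (0 : ℝ) 1)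
    (hβ : β ∈ Set.Ioo (0 : ℝ) (1 + α)⁻¹) :
    ∃ ℓstar : ℝ, ∀ ℓ : ℕ → ℝ, ℓ 0 ≥ ℓstar →
      (∀ k : ℕ, ℓ (k + 1) = ℓ k + Real.log (1 + (ℓ k) ^ (-α : ℝ))) →
      ∀ k : ℕ, ℓ k ≥ (ℓ 0 + k) ^ (β : ℝ) := by
  have hβα : β * (1 + α) < 1 := by
    simpa [inv_mul_cancel₀ (by linarith [hα.1] : 1 + α ≠ 0)] using
      mul_lt_mul_of_pos_right hβ.2 (by linarith [hα.1] : 0 < 1 + α)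
  obtain ⟨N, hN⟩ := eventually_atTop.1
    (Real.eventually_rpow_add_one_le_add_log_one_add_rpow_neg hα.1.le hβ.1.le hβα)
  refine ⟨N, fun ℓ h0 hrec k => ?_⟩
  induction k with
  | zero =>
    have hβ1 : β ≤ 1 := by nlinarith [hα.1, hβ.1]
    simpa using Real.rpow_le_rpow_of_exponent_le (hN _ h0).1 hβ1
  | succ k ih =>
    rw [hrec, Nat.cast_succ, ← add_assoc]
    exact (hN _ (by linarith [k.cast_nonneg (α := ℝ)])).2 _ ih
end
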